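/- Let H be a real Hilbert space, D a positive integer, and B ∈ ℝ^{D×D} symmetric positive definite. Equip tuples F : Fin D → H with the inner product ⟨F, G⟩_B := Σ_{i,j} (B⁻¹)_{ij} ⟪F_i, G_j⟫_H. Fix ε ∈ H and d ∈ Fin D, and let E : Fin D → H be given by E_i := B_{id} • ε. Then the worst-case value of the d-th error functional over the B-unit ball satisfies sup_{F : ‖F‖_B ≤ 1} | ⟨F, E⟩_B | = √(Σ_{i,j} (B⁻¹)_{ij} B_{id} B_{jd}) · ‖ε‖_H. In particular, with ε = m − Σ_{j=1}^N w_j k(x_j) the error representer of a scalar quadrature rule, the worst-case integration error of output d for multi-output Bayesian quadrature with separable kernel C = B c and common design equals √(Σ_{i,j} (B⁻¹)_{ij} B_{id} B_{jd}) times the scalar worst-case error, so both converge at the same rate in N. -/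

import Mathlib

open Matrix
open scoped RealInnerProductSpace

/-!
On tuples `F : Fin D → H`, `⟨F, G⟩_B` is the bilinear form of the positive semidefinite matrix `B⁻¹`,
so Cauchy–Schwarz bounds `|⟨F, E⟩_B|` on the unit ball by `√⟨E, E⟩_B`, with equality at the
normalisation of `E`. Since `E` is `ε` scaled by the column `B · d`,
`⟨E, E⟩_B = (∑ i j, B⁻¹ i j * B i d * B j d) * ‖ε‖²`.
-/

namespace LinearMap.BilinForm

variable {V : Type*} [AddCommGroup V] [Module ℝ V] {b : LinearMap.BilinForm ℝ V}

theorem IsPosSemidef.abs_apply_le_sqrt (hb : b.IsPosSemidef) {x : V} (hx : b x x ≤ 1) (y : V) :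
    |b x y| ≤ √(b y y) := by
  rw [← Real.sqrt_sq_eq_abs]
  refine Real.sqrt_le_sqrt ?_
  calc (b x y) ^ 2 ≤ b x x * b y y :=
        b.apply_sq_le_of_symm hb.nonneg (isSymm_iff.1 hb.isSymm) x y
    _ ≤ 1 * b y y := by gcongr; exact hb.nonneg y
    _ = b y y := one_mul _

theorem IsPosSemidef.iSup_abs_apply_eq_sqrt (hb : b.IsPosSemidef) (y : V) :
    ⨆ x : {x : V // b x x ≤ 1}, |b x y| = √(b y y) := by
  have : Nonempty {x : V // b x x ≤ 1} := ⟨⟨0, by simp⟩⟩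
  have hbdd : BddAbove (Set.range fun x : {x : V // b x x ≤ 1} => |b x y|) :=
    ⟨√(b y y), Set.forall_mem_range.2 fun x => hb.abs_apply_le_sqrt x.2 y⟩
  refine le_antisymm (ciSup_le fun x => hb.abs_apply_le_sqrt x.2 y) ?_
  rcases (hb.nonneg y).eq_or_lt with hy | hy
  · rw [← hy, Real.sqrt_zero]
    exact (abs_nonneg _).trans (le_ciSup hbdd ⟨0, by simp⟩)
  have hs : 0 < √(b y y) := Real.sqrt_pos.2 hy
  have hunit : b ((√(b y y))⁻¹ • y) ((√(b y y))⁻¹ • y) = 1 := by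
    simp only [map_smul, smul_apply, smul_eq_mul]
    field_simp
    rw [Real.sq_sqrt hy.le]
  refine le_ciSup_of_le hbdd ⟨_, hunit.le⟩ (le_of_eq ?_)
  simp only [map_smul, smul_apply, smul_eq_mul]
  rw [abs_of_nonneg (by positivity)]
  field_simp
  rw [Real.sq_sqrt hy.le]

end LinearMap.BilinForm

namespace Matrix

theorem PosSemidef.exists_eq_conjTranspose_mul_self {n : Type*} [Fintype n] [DecidableEq n]
    {M : Matrix n n ℝ} (hM : M.PosSemidef) : ∃ A : Matrix n n ℝ, M = Aᴴ * A := by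
  open scoped MatrixOrder in
  obtain ⟨X, hX, -, rfl⟩ := CFC.exists_sqrt_of_isSelfAdjoint_of_quasispectrumRestricts
    hM.isHermitian (QuasispectrumRestricts.nnreal_of_nonneg hM.nonneg)
  exact ⟨X, by rw [← star_eq_conjTranspose, hX.star_eq]⟩

variable {ι H : Type*} [Fintype ι] [NormedAddCommGroup H] [InnerProductSpace ℝ H]

def innerBilinForm (M : Matrix ι ι ℝ) : LinearMap.BilinForm ℝ (ι → H) :=
  LinearMap.mk₂ ℝ (fun F G => ∑ i, ∑ j, M i j * ⟪F i, G j⟫)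
    (fun F F' G => by simp only [Pi.add_apply, inner_add_left, mul_add, Finset.sum_add_distrib])
    (fun c F G => by
      simp only [Pi.smul_apply, real_inner_smul_left, smul_eq_mul, Finset.mul_sum]
      exact Finset.sum_congr rfl fun _ _ => Finset.sum_congr rfl fun _ _ => by ring)
    (fun F G G' => by simp only [Pi.add_apply, inner_add_right, mul_add, Finset.sum_add_distrib])
    (fun c F G => by
      simp only [Pi.smul_apply, real_inner_smul_right, smul_eq_mul, Finset.mul_sum]
      exact Finset.sum_congr rfl fun _ _ => Finset.sum_congr rfl fun _ _ => by ring)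

@[simp]
theorem innerBilinForm_apply (M : Matrix ι ι ℝ) (F G : ι → H) :
    M.innerBilinForm F G = ∑ i, ∑ j, M i j * ⟪F i, G j⟫ :=
  rfl

theorem innerBilinForm_smul_smul (M : Matrix ι ι ℝ) (a b : ι → ℝ) (x : H) :
    M.innerBilinForm (fun i => a i • x) (fun j => b j • x) =
      (∑ i, ∑ j, M i j * a i * b j) * ‖x‖ ^ 2 := by
  simp only [innerBilinForm_apply, real_inner_smul_left, real_inner_smul_right,
    real_inner_self_eq_norm_sq, Finset.sum_mul]
  exact Finset.sum_congr rfl fun i _ => Finset.sum_congr rfl fun j _ => by ring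

theorem innerBilinForm_conjTranspose_mul_self (A : Matrix ι ι ℝ) (F : ι → H) :
    (Aᴴ * A).innerBilinForm F F = ∑ k, ‖∑ i, A k i • F i‖ ^ 2 := by
  simp only [innerBilinForm_apply, ← real_inner_self_eq_norm_sq, sum_inner, inner_sum,
    real_inner_smul_left, real_inner_smul_right, mul_apply, conjTranspose_apply, star_trivial,
    Finset.sum_mul]
  refine (Finset.sum_congr rfl fun _ _ => Finset.sum_comm).trans (Finset.sum_comm.trans ?_)
  exact Finset.sum_congr rfl fun k _ => Finset.sum_congr rfl fun i _ =>
    Finset.sum_congr rfl fun j _ => by rw [real_inner_comm, mul_assoc]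

theorem PosSemidef.isPosSemidef_innerBilinForm {M : Matrix ι ι ℝ} (hM : M.PosSemidef) :
    (M.innerBilinForm (H := H)).IsPosSemidef where
  eq F G := by
    simp only [innerBilinForm_apply]
    rw [Finset.sum_comm]
    exact Finset.sum_congr rfl fun j _ => Finset.sum_congr rfl fun i _ => by
      rw [real_inner_comm, ← hM.isHermitian.apply j i, star_trivial]
  nonneg F := by
    classical
    obtain ⟨A, rfl⟩ := hM.exists_eq_conjTranspose_mul_self
    rw [innerBilinForm_conjTranspose_mul_self]
    positivity

end Matrix

theorem separable_kernel_worst_case_error_factor_general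
    {H : Type*} [NormedAddCommGroup H] [InnerProductSpace ℝ H]
    (D : ℕ) (B : Matrix (Fin D) (Fin D) ℝ) (hB : B.PosDef)
    (ε : H) (d : Fin D) :
    (⨆ F : {F : Fin D → H // (∑ i, ∑ j, B⁻¹ i j * ⟪F i, F j⟫) ≤ 1},
        |∑ i, ∑ j, B⁻¹ i j * ⟪(F : Fin D → H) i, B j d • ε⟫|)
      = Real.sqrt (∑ i, ∑ j, B⁻¹ i j * B i d * B j d) * ‖ε‖ := by
  calc _ = √(B⁻¹.innerBilinForm (fun i => B i d • ε) (fun j => B j d • ε)) :=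
        hB.inv.posSemidef.isPosSemidef_innerBilinForm.iSup_abs_apply_eq_sqrt _
    _ = _ := by
      rw [innerBilinForm_smul_smul, Real.sqrt_mul' _ (sq_nonneg _), Real.sqrt_sq (norm_nonneg _)]

/-- Worst-case error of output `d` in multi-output Bayesian quadrature with separable
kernel: on tuples `Fin D → H` with the inner product
`⟨F, G⟩_B = ∑ i j, (B⁻¹) i j * ⟪F i, G j⟫` (for `B` symmetric positive definite),
the supremum over the `B`-unit ball of `|⟨F, E⟩_B|` with `E i = B i d • ε` equals
`√(∑ i j, (B⁻¹) i j * B i d * B j d) * ‖ε‖`. -/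
theorem separable_kernel_worst_case_error_factor
    {H : Type*} [NormedAddCommGroup H] [InnerProductSpace ℝ H] [CompleteSpace H]
    (D : ℕ) (hD : 0 < D) (B : Matrix (Fin D) (Fin D) ℝ) (hB : B.PosDef)
    (ε : H) (d : Fin D) :
    (⨆ F : {F : Fin D → H // (∑ i, ∑ j, B⁻¹ i j * ⟪F i, F j⟫) ≤ 1},
        |∑ i, ∑ j, B⁻¹ i j * ⟪(F : Fin D → H) i, B j d • ε⟫|)
      = Real.sqrt (∑ i, ∑ j, B⁻¹ i j * B i d * B j d) * ‖ε‖ :=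
  separable_kernel_worst_case_error_factor_general D B hB ε d
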